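/- In a partition of $2m+1$ parametrizing a nilpotent orbit of $\mathfrak{so}(2m+1,\mathbb{C})$ (every even part with even multiplicity), pair the transpose columns as $(m_0)(m_1, m_2) \cdots (m_{2p-1}, m_{2p})$ after removing all adjacent equal pairs $m'_{2j} = m'_{2j+1}$. Then $m_0$ is odd, and within each remaining pair $(m_{2i-1}, m_{2i})$ the two entries have the same parity. -/

import Mathlib

/-!
Let `r t` be the number of columns of length at least `t` (the `t`-th part of `P`) and `K t` the
number of surviving columns `m_j` of length at least `t`. Removed columns come in equal pairs, so
`r t ≡ K t (mod 2)`. For a pair `a = m_{2i-1} ≥ b = m_{2i}`, the strict drops at the neighbouring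
even–odd positions give `K = 2i` on `(b, a]`, `K (a + 1) = 2i - 1` and `K b = 2i + 1`. So the parts
of `P` indexed by `(b, a]` are even while their neighbours outside are odd: `(b, a]` is a union of
full blocks of equal even parts, each of even multiplicity, and `a - b` is even. Finally
`m_0 ≡ ∑ m_j ≡ ∑ cols = 2m + 1 (mod 2)`.
-/

open Finset

def countGE (s : Multiset ℕ) (t : ℕ) : ℕ := s.countP (t ≤ ·)

-- For `t ≥ 1`, `countGE s t` is the length of the `t`-th column of the Young diagram with rows
-- `s`; when the entries of `s` are at most `n`, `columns s n` is therefore the transpose partition.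
def columns (s : Multiset ℕ) (n : ℕ) : Multiset ℕ :=
  ((Multiset.range n).map fun j => countGE s (j + 1)).filter (0 < ·)

theorem countGE_antitone (s : Multiset ℕ) : Antitone (countGE s) := by
  intro t t' h
  simp only [countGE, Multiset.countP_eq_card_filter]
  exact Multiset.card_le_card (Multiset.monotone_filter_right _ fun x hx => h.trans hx)

theorem countGE_add (s s' : Multiset ℕ) (t : ℕ) :
    countGE (s + s') t = countGE s t + countGE s' t :=
  Multiset.countP_add _ _ _

theorem countGE_filter_pos (s : Multiset ℕ) {t : ℕ} (ht : 0 < t) :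
    countGE (s.filter (0 < ·)) t = countGE s t := by
  rw [countGE, Multiset.countP_filter]
  exact Multiset.countP_congr rfl fun x _ => propext ⟨And.left, fun h => ⟨h, by omega⟩⟩

theorem countGE_eq_countGE_succ_add_count (s : Multiset ℕ) (v : ℕ) :
    countGE s v = countGE s (v + 1) + s.count v := by
  induction s using Multiset.induction with
  | empty => simp [countGE]
  | cons a s ih =>
    simp only [countGE, Multiset.countP_cons, Multiset.count_cons] at ih ⊢
    split_ifs <;> omega

theorem countGE_map_range (f : ℕ → ℕ) (n t : ℕ) :
    countGE ((Multiset.range n).map f) t = #{j ∈ range n | t ≤ f j} := by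
  rw [countGE, Multiset.countP_map]
  rfl

theorem countGE_map_range_le (f : ℕ → ℕ) (n t : ℕ) :
    countGE ((Multiset.range n).map f) t ≤ n := by
  rw [countGE_map_range]
  exact (card_filter_le _ _).trans (card_range n).le

theorem lt_countGE_map_range_iff {f : ℕ → ℕ} {n k : ℕ} (hf : AntitoneOn f (Set.Iio n))
    (hk : k < n) (t : ℕ) : k < countGE ((Multiset.range n).map f) t ↔ t ≤ f k := by
  rw [countGE_map_range]
  constructor
  · intro h
    by_contra! hfk
    have hsub : {j ∈ range n | t ≤ f j} ⊆ range k := by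
      intro j hj
      simp only [mem_filter, mem_range] at hj ⊢
      by_contra! hkj
      exact absurd (hf (Set.mem_Iio.2 hk) (Set.mem_Iio.2 hj.1) hkj) (by omega)
    exact absurd (card_le_card hsub) (by simpa using h)
  · intro h
    have hsub : range (k + 1) ⊆ {j ∈ range n | t ≤ f j} := by
      intro j hj
      simp only [mem_filter, mem_range] at hj ⊢
      exact ⟨by omega, h.trans (hf (Set.mem_Iio.2 (by omega)) (Set.mem_Iio.2 hk) (by omega))⟩
    simpa using card_le_card hsub

theorem le_countGE_columns_iff {s : Multiset ℕ} {n t v : ℕ} (hs : ∀ x ∈ s, x ≤ n) (ht : 0 < t)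
    (hv : 0 < v) : v ≤ countGE (columns s n) t ↔ t ≤ countGE s v := by
  rw [columns, countGE_filter_pos _ ht]
  rcases Nat.lt_or_ge n v with hnv | hvn
  · have hzero : countGE s v = 0 := Multiset.countP_eq_zero.2 fun x hx => by
      have := hs x hx; omega
    have := countGE_map_range_le (fun j => countGE s (j + 1)) n t
    omega
  · have hanti : AntitoneOn (fun j => countGE s (j + 1)) (Set.Iio n) :=
      fun _ _ _ _ h => countGE_antitone s (by omega)
    have := lt_countGE_map_range_iff hanti (k := v - 1) (by omega) t
    rwa [Nat.sub_add_cancel hv, Nat.sub_lt_iff_lt_add hv, Nat.lt_add_one_iff] at this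

theorem countGE_columns_eq_zero {s : Multiset ℕ} {n t : ℕ} (hs : ∀ x ∈ s, x ≤ n)
    (ht : Multiset.card s < t) : countGE (columns s n) t = 0 := by
  by_contra h
  have := (le_countGE_columns_iff hs (t := t) (v := 1) (by omega) one_pos).1 (by omega)
  exact absurd (this.trans (Multiset.countP_le_card _ _)) (by omega)

theorem card_filter_Ioc_eq_sub_of_galois {r c : ℕ → ℕ} {N v : ℕ}
    (hrc : ∀ t w, 0 < t → 0 < w → (w ≤ r t ↔ t ≤ c w)) (hc : ∀ w, c w ≤ N) (hv : 0 < v) :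
    #{t ∈ Ioc 0 N | r t = v} = c v - c (v + 1) := by
  have hupper : ∀ w, 0 < w → {t ∈ Ioc 0 N | w ≤ r t} = Ioc 0 (c w) := by
    intro w hw
    ext t
    simp only [mem_filter, mem_Ioc]
    constructor
    · rintro ⟨⟨ht, -⟩, h⟩
      exact ⟨ht, (hrc t w ht hw).1 h⟩
    · rintro ⟨ht, h⟩
      exact ⟨⟨ht, h.trans (hc w)⟩, (hrc t w ht hw).2 h⟩
  have hfib : {t ∈ Ioc 0 N | r t = v} =
      {t ∈ Ioc 0 N | v ≤ r t} \ {t ∈ Ioc 0 N | v + 1 ≤ r t} := by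
    ext t
    simp only [mem_filter, mem_sdiff, not_and]
    constructor
    · rintro ⟨ht, rfl⟩
      exact ⟨⟨ht, le_rfl⟩, fun _ => by omega⟩
    · rintro ⟨⟨ht, hvr⟩, hrv⟩
      exact ⟨ht, by have := hrv ht; omega⟩
  rw [hfib, card_sdiff_of_subset (monotone_filter_right _ fun t h => by omega),
    hupper v hv, hupper (v + 1) (by omega), Nat.card_Ioc, Nat.card_Ioc, Nat.sub_zero,
    Nat.sub_zero]

theorem card_filter_countGE_columns_eq_count {s : Multiset ℕ} {n v : ℕ}
    (hs : ∀ x ∈ s, x ≤ n) (hv : 0 < v) :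
    #{t ∈ Ioc 0 (Multiset.card s) | countGE (columns s n) t = v} = s.count v := by
  rw [card_filter_Ioc_eq_sub_of_galois (fun t w ht hw => le_countGE_columns_iff hs ht hw)
    (fun w => Multiset.countP_le_card _ _) hv, countGE_eq_countGE_succ_add_count s v]
  omega

theorem sum_range_countGE_succ {s : Multiset ℕ} {n : ℕ} (hs : ∀ x ∈ s, x ≤ n) :
    ∑ j ∈ range n, countGE s (j + 1) = s.sum := by
  induction s using Multiset.induction with
  | empty => simp [countGE]
  | cons a s ih =>
    have hrow : ∑ j ∈ range n, (if j + 1 ≤ a then 1 else 0) = a := by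
      have ha : a ≤ n := hs a (Multiset.mem_cons_self a s)
      rw [sum_boole, show {j ∈ range n | j + 1 ≤ a} = range a by ext; simp; omega]
      simp
    simp only [countGE, Multiset.countP_cons, sum_add_distrib, Multiset.sum_cons] at ih ⊢
    rw [ih fun x hx => hs x (Multiset.mem_cons_of_mem hx), hrow, add_comm]

theorem sum_filter_pos (s : Multiset ℕ) : (s.filter (0 < ·)).sum = s.sum := by
  conv_rhs => rw [← Multiset.filter_add_not (0 < ·) s, Multiset.sum_add]
  rw [Multiset.sum_eq_zero (s := s.filter (¬0 < ·)) fun x hx => by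
    simpa using (Multiset.mem_filter.1 hx).2, add_zero]

theorem sum_columns {s : Multiset ℕ} {n : ℕ} (hs : ∀ x ∈ s, x ≤ n) :
    (columns s n).sum = s.sum := by
  rw [columns, sum_filter_pos, ← sum_range_countGE_succ hs]
  rfl

theorem even_sub_of_even_fibers {r : ℕ → ℕ} {N a b : ℕ} (hr : Antitone r)
    (hN : ∀ t, N < t → r t = 0)
    (hfib : ∀ v, 0 < v → Even v → Even #{t ∈ Ioc 0 N | r t = v})
    (hwin : ∀ t ∈ Ioc b a, Even (r t)) (ha : Odd (r (a + 1))) (hb : b = 0 ∨ Odd (r b)) :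
    Even (a - b) := by
  have haN : a < N := by
    by_contra! h
    rw [hN (a + 1) (by omega)] at ha
    exact Nat.not_odd_zero ha
  -- A fibre of `r` meeting the window cannot leave it: `r` is odd just outside the window.
  have hfib_win : ∀ t₀ ∈ Ioc b a,
      {t ∈ Ioc b a | r t = r t₀} = {t ∈ Ioc 0 N | r t = r t₀} := by
    intro t₀ ht₀
    have hodd : ∀ t', Odd (r t') → r t' ≠ r t₀ := fun t' ho he =>
      Nat.not_even_iff_odd.2 ho (he ▸ hwin t₀ ht₀)
    rw [mem_Ioc] at ht₀
    ext t
    simp only [mem_filter, mem_Ioc]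
    constructor
    · rintro ⟨⟨htb, hta⟩, h⟩
      exact ⟨⟨by omega, by omega⟩, h⟩
    · rintro ⟨⟨ht, -⟩, h⟩
      refine ⟨⟨?_, ?_⟩, h⟩
      · by_contra! htb
        rcases hb with rfl | hb
        · omega
        exact hodd b hb (le_antisymm (h ▸ hr htb) (hr ht₀.1.le))
      · by_contra! hta
        exact hodd (a + 1) ha (le_antisymm (hr (by omega)) (h ▸ hr (Nat.succ_le_of_lt hta)))
  have hpos : ∀ t ∈ Ioc b a, 0 < r t := fun t ht => by
    have := hr (show t ≤ a + 1 by rw [mem_Ioc] at ht; omega)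
    have := ha.pos
    omega
  rw [← Nat.card_Ioc, card_eq_sum_card_image r]
  refine even_sum _ fun v hv => ?_
  obtain ⟨t₀, ht₀, rfl⟩ := mem_image.1 hv
  rw [hfib_win t₀ ht₀]
  exact hfib _ (hpos t₀ ht₀) (hwin t₀ ht₀)

theorem mod_two_eq_of_parity_window {mm r : ℕ → ℕ} {p N i : ℕ}
    (hanti : AntitoneOn mm (Set.Iio (2 * p + 1)))
    (hstop : ∀ i, 2 * i + 1 ≤ 2 * p → mm (2 * i + 1) < mm (2 * i))
    (hr : Antitone r) (hN : ∀ t, N < t → r t = 0)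
    (hfib : ∀ v, 0 < v → Even v → Even #{t ∈ Ioc 0 N | r t = v})
    (hrK : ∀ t, 0 < t → r t % 2 = countGE ((Multiset.range (2 * p + 1)).map mm) t % 2)
    (hi : 1 ≤ i) (hip : i ≤ p) : mm (2 * i - 1) % 2 = mm (2 * i) % 2 := by
  have hK := fun k hk => lt_countGE_map_range_iff hanti (k := k) hk
  have hKle := countGE_map_range_le mm (2 * p + 1)
  set K := countGE ((Multiset.range (2 * p + 1)).map mm)
  have hprev := hstop (i - 1) (by omega)
  rw [show 2 * (i - 1) + 1 = 2 * i - 1 by omega, show 2 * (i - 1) = 2 * i - 2 by omega] at hprev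
  have hba : mm (2 * i) ≤ mm (2 * i - 1) :=
    hanti (Set.mem_Iio.2 (by omega)) (Set.mem_Iio.2 (by omega)) (by omega)
  have hwin : ∀ t ∈ Ioc (mm (2 * i)) (mm (2 * i - 1)), K t = 2 * i := fun t ht => by
    rw [mem_Ioc] at ht
    have h1 := hK (2 * i - 1) (by omega) t
    have h2 := hK (2 * i) (by omega) t
    omega
  have hKa : K (mm (2 * i - 1) + 1) = 2 * i - 1 := by
    have h1 := hK (2 * i - 1) (by omega) (mm (2 * i - 1) + 1)
    have h2 := hK (2 * i - 2) (by omega) (mm (2 * i - 1) + 1)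
    omega
  have hKb : K (mm (2 * i)) = 2 * i + 1 := by
    have h1 := hK (2 * i) (by omega) (mm (2 * i))
    have h2 : ¬2 * i + 1 < K (mm (2 * i)) := by
      rcases Nat.lt_or_ge i p with hlt | hge
      · rw [hK (2 * i + 1) (by omega)]
        have := hstop i (by omega)
        omega
      · have := hKle (mm (2 * i))
        omega
    omega
  have heven := even_sub_of_even_fibers (a := mm (2 * i - 1)) (b := mm (2 * i)) hr hN hfib
    (fun t ht => by
      have := hrK t (by rw [mem_Ioc] at ht; omega)
      rw [Nat.even_iff]; rw [hwin t ht] at this; omega)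
    (by have := hrK (mm (2 * i - 1) + 1) (Nat.succ_pos _); rw [Nat.odd_iff]; omega)
    (by
      rcases Nat.eq_zero_or_pos (mm (2 * i)) with h0 | hpos
      · exact Or.inl h0
      · have := hrK _ hpos; rw [Nat.odd_iff]; omega)
  rw [Nat.even_sub hba, Nat.even_iff, Nat.even_iff] at heven
  omega

theorem sum_range_two_mul_add_one_mod_two {f : ℕ → ℕ} {p : ℕ}
    (h : ∀ i, 1 ≤ i → i ≤ p → f (2 * i - 1) % 2 = f (2 * i) % 2) :
    (∑ j ∈ range (2 * p + 1), f j) % 2 = f 0 % 2 := by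
  induction p with
  | zero => simp
  | succ p ih =>
    have hpair := h (p + 1) (by omega) le_rfl
    rw [show 2 * (p + 1) - 1 = 2 * p + 1 by omega, show 2 * (p + 1) = 2 * p + 2 by omega]
      at hpair
    have := ih fun i hi hip => h i hi (by omega)
    rw [show 2 * (p + 1) + 1 = 2 * p + 1 + 1 + 1 by ring, sum_range_succ, sum_range_succ]
    omega

theorem stmt11_general (m p : ℕ) (P : Nat.Partition (2 * m + 1))
    (heven : ∀ i, Even i → Even (Multiset.count i P.parts))
    (cols : Multiset ℕ)
    (hcols : cols = ((Multiset.range (2 * m + 1)).map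
      (fun j => Multiset.card (P.parts.filter (fun x => j + 1 ≤ x)))).filter
        (fun c => 0 < c))
    (mm : ℕ → ℕ) (Q : Multiset ℕ)
    (hanti : ∀ i j, i ≤ j → j ≤ 2 * p → mm j ≤ mm i)
    (hstop : ∀ i, 2 * i + 1 ≤ 2 * p → mm (2 * i + 1) < mm (2 * i))
    (hsplit : cols =
      (((List.range (2 * p + 1)).map mm : Multiset ℕ).filter (fun c => 0 < c))
        + Q + Q) :
    Odd (mm 0) ∧
    ∀ i, 1 ≤ i → i ≤ p → mm (2 * i - 1) % 2 = mm (2 * i) % 2 := by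
  have hle : ∀ x ∈ P.parts, x ≤ 2 * m + 1 := fun _ => Nat.Partition.le_of_mem_parts
  replace hcols : cols = columns P.parts (2 * m + 1) := by
    simp only [hcols, columns, countGE, Multiset.countP_eq_card_filter]
  replace hsplit : cols = ((Multiset.range (2 * p + 1)).map mm).filter (0 < ·) + Q + Q := hsplit
  have hpair : ∀ i, 1 ≤ i → i ≤ p → mm (2 * i - 1) % 2 = mm (2 * i) % 2 := by
    refine fun i => mod_two_eq_of_parity_window
      (fun i _ j hj hij => hanti i j hij (Nat.lt_succ_iff.1 hj)) hstop (countGE_antitone cols)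
      (fun t ht => hcols ▸ countGE_columns_eq_zero hle ht)
      (fun v hv hev => hcols ▸ card_filter_countGE_columns_eq_count hle hv ▸ heven v hev)
      (fun t ht => ?_)
    rw [hsplit, countGE_add, countGE_add, countGE_filter_pos _ ht]
    omega
  refine ⟨?_, hpair⟩
  have htotal : (∑ j ∈ range (2 * p + 1), mm j) + Q.sum + Q.sum = 2 * m + 1 := by
    rw [← P.parts_sum, ← sum_columns hle, ← hcols, hsplit, Multiset.sum_add, Multiset.sum_add,
      sum_filter_pos]
    rfl
  have := sum_range_two_mul_add_one_mod_two hpair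
  rw [Nat.odd_iff]
  omega

/-- Let `P` be a partition of `2m+1` parametrizing a nilpotent
orbit of `so(2m+1,ℂ)` (every even part has even multiplicity), with multiset
of (positive) columns `cols`.  Suppose the weakly decreasing sequence
`mm 0 ≥ mm 1 ≥ … ≥ mm (2p)` (of odd length `2p+1`, possibly ending in an
appended zero) is obtained from the column sequence by removing adjacent equal
pairs of columns — encoded by `cols = {mm 0, …, mm (2p)}.filter (0 < ·) + Q + Q`
for some multiset `Q` of removed columns — in such a way that no further
adjacent equal pairs in even–odd position remain, i.e. `mm (2i) > mm (2i+1)`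
for `2i+1 ≤ 2p`.  Pairing the surviving columns as
`(mm 0)(mm 1, mm 2)⋯(mm (2p-1), mm (2p))`, the first column `mm 0` is odd and
the two members of each pair `(mm (2i-1), mm (2i))` have the same parity. -/
theorem stmt11 (m p : ℕ) (P : Nat.Partition (2 * m + 1))
    (heven : ∀ i, Even i → Even (Multiset.count i P.parts))
    (cols : Multiset ℕ)
    (hcols : cols = ((Multiset.range (2 * m + 1)).map
      (fun j => Multiset.card (P.parts.filter (fun x => j + 1 ≤ x)))).filter
        (fun c => 0 < c))
    (mm : ℕ → ℕ) (Q : Multiset ℕ) (hQpos : ∀ q ∈ Q, 0 < q)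
    (hanti : ∀ i j, i ≤ j → j ≤ 2 * p → mm j ≤ mm i)
    (hstop : ∀ i, 2 * i + 1 ≤ 2 * p → mm (2 * i + 1) < mm (2 * i))
    (hsplit : cols =
      (((List.range (2 * p + 1)).map mm : Multiset ℕ).filter (fun c => 0 < c))
        + Q + Q) :
    Odd (mm 0) ∧
    ∀ i, 1 ≤ i → i ≤ p → mm (2 * i - 1) % 2 = mm (2 * i) % 2 :=
  stmt11_general m p P heven cols hcols mm Q hanti hstop hsplit
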